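/- Let G be a nonabelian finite 2-group in which the number of subgroups not in CD(G) is at most 6. Then G itself belongs to CD(G). -/

import Mathlib

noncomputable def mCD {G : Type*} [Group G] (H : Subgroup G) : ℕ :=
  Nat.card H * Nat.card (Subgroup.centralizer (H : Set G))

noncomputable def mStar (G : Type*) [Group G] : ℕ :=
  sSup (Set.range fun H : Subgroup G => mCD H)

noncomputable def CD (G : Type*) [Group G] : Set (Subgroup G) :=
  {H | mCD H = mStar G}

noncomputable def deltaCD (G : Type*) [Group G] : ℕ :=
  Nat.card {H : Subgroup G // H ∉ CD G}

/-!
`CD G` is closed under `H ↦ centralizer H` (a member satisfies `C(C(H)) = H`) and under joins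
(from `|H| |K| ≤ |H ⊔ K| |H ⊓ K|` and `C(H ⊔ K) = C(H) ⊓ C(K)`), so it has a largest member `M`
and every member lies between `C(M)` and `M`.

Suppose `G ∉ CD G`. Then `M` is proper and `|G| |Z(G)| < |M| |C(M)|`, i.e.
`|C(M)| > [G : M] |Z(G)| ≥ 4`. No subgroup of order `< |C(M)|` lies in `CD G`, and neither does
any subgroup `H ≠ M` with `|M| ≤ |H|`. The latter include `G` and at least two of the at least
three subgroups of index 2 of the noncyclic 2-group `G`. The former include subgroups of orders
1, 2, 4, 8, or, when `|C(M)| = 8`, a second subgroup of order 2 or 4: otherwise the unique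
subgroup of order 4 would be central and `|Z(G)| ≥ 4`. That makes seven subgroups outside `CD G`.
-/

open Subgroup

namespace Subgroup

variable {G : Type*} [Group G]

theorem card_mul_relIndex {A B : Subgroup G} (h : A ≤ B) :
    Nat.card A * A.relIndex B = Nat.card B := by
  simpa [relIndex_bot_left] using relIndex_mul_relIndex ⊥ A B bot_le h

theorem card_mul_card_le_card_sup_mul_card_inf [Finite G] (H K : Subgroup G) :
    Nat.card H * Nat.card K ≤ Nat.card ↥(H ⊔ K) * Nat.card ↥(H ⊓ K) := by
  have hK : K.relIndex H ≤ K.relIndex (H ⊔ K) :=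
    relIndex_le_of_le_right le_sup_left (FiniteIndex.index_ne_zero (H := K.subgroupOf (H ⊔ K)))
  calc Nat.card H * Nat.card K
      = Nat.card ↥(H ⊓ K) * K.relIndex H * Nat.card K := by
        rw [← inf_relIndex_left, card_mul_relIndex inf_le_left]
    _ ≤ Nat.card ↥(H ⊓ K) * K.relIndex (H ⊔ K) * Nat.card K := by gcongr
    _ = Nat.card ↥(H ⊔ K) * Nat.card ↥(H ⊓ K) := by
        rw [← card_mul_relIndex (le_sup_right : K ≤ H ⊔ K)]; ring

theorem centralizer_sup (H K : Subgroup G) :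
    centralizer ((H ⊔ K : Subgroup G) : Set G) = centralizer H ⊓ centralizer K := by
  rw [sup_eq_closure, centralizer_closure]
  exact SetLike.coe_injective Set.centralizer_union

theorem exists_mem_notMem_of_index_eq_two {A B : Subgroup G} (hA : A.index = 2)
    (hB : B.index = 2) (hAB : A ≠ B) : ∃ a ∈ A, a ∉ B := by
  refine SetLike.not_le_iff_exists.mp fun h => hAB (le_antisymm h (relIndex_eq_one.mp ?_))
  have := relIndex_mul_index h
  rw [hA, hB] at this
  omega

theorem exists_index_eq_two_ne_ne {A B : Subgroup G} (hA : A.index = 2) (hB : B.index = 2)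
    (hAB : A ≠ B) : ∃ C : Subgroup G, C.index = 2 ∧ C ≠ A ∧ C ≠ B := by
  obtain ⟨a, haA, haB⟩ := exists_mem_notMem_of_index_eq_two hA hB hAB
  obtain ⟨b, hbB, hbA⟩ := exists_mem_notMem_of_index_eq_two hB hA hAB.symm
  -- the kernel of the product of the two characters `G → G ⧸ A ≃ ℤ/2` and `G → G ⧸ B ≃ ℤ/2`
  let C : Subgroup G :=
    { carrier := {x | x ∈ A ↔ x ∈ B}
      one_mem' := by simp [one_mem]
      mul_mem' := fun {x y} hx hy => by
        simp only [Set.mem_ofPred_eq, mul_mem_iff_of_index_two hA,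
          mul_mem_iff_of_index_two hB] at *
        tauto
      inv_mem' := fun {x} hx => by simpa only [Set.mem_ofPred_eq, inv_mem_iff] using hx }
  have hmem (x : G) : x ∈ C ↔ (x ∈ A ↔ x ∈ B) := Iff.rfl
  refine ⟨C, index_eq_two_iff_exists_notMem_and'.mpr
    ⟨a, by simp [hmem, haA, haB], fun x => ?_⟩, fun h => ?_, fun h => ?_⟩
  · simp only [hmem, mul_mem_iff_of_index_two hA, mul_mem_iff_of_index_two hB, haA, haB]
    tauto
  · exact haB (((hmem a).mp (h ▸ haA)).mp haA)
  · exact hbA (((hmem b).mp (h ▸ hbB)).mpr hbB)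

end Subgroup

namespace IsPGroup

section Prime

variable {p : ℕ} [hp : Fact p.Prime] {G : Type*} [Group G] [Finite G]

theorem exists_index_eq_le (hG : IsPGroup p G) {H : Subgroup G} (hH : H ≠ ⊤) :
    ∃ A : Subgroup G, H ≤ A ∧ A.index = p := by
  obtain ⟨n, hn⟩ := hG.exists_card_eq
  obtain ⟨k, hk⟩ := (hG.to_subgroup H).exists_card_eq
  have hkn : k < n := by
    have : Nat.card H < Nat.card G :=
      lt_of_le_of_ne (card_le_card_group H) (mt (eq_top_of_card_eq H) hH)
    rw [hk, hn] at this
    exact (Nat.pow_lt_pow_iff_right hp.out.one_lt).mp this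
  obtain ⟨A, hAcard, hHA⟩ := Sylow.exists_subgroup_card_pow_prime_le p
    (hn ▸ pow_dvd_pow p (Nat.sub_le n 1)) H hk (Nat.le_sub_one_of_lt hkn)
  refine ⟨A, hHA, Nat.eq_of_mul_eq_mul_left (pow_pos hp.out.pos (n - 1)) ?_⟩
  rw [← hAcard, card_mul_index, hn, hAcard, ← pow_succ, Nat.sub_add_cancel (by omega)]

theorem exists_index_eq_ne (hG : IsPGroup p G) (hnc : ¬IsCyclic G) {A : Subgroup G}
    (hA : A.index = p) : ∃ B : Subgroup G, B.index = p ∧ B ≠ A := by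
  by_contra! hB
  have hAtop : A = ⊤ := by
    refine (eq_top_iff' A).mpr fun x => ?_
    have hx : zpowers x ≠ ⊤ := fun hx => hnc ⟨x, (eq_top_iff' _).mp hx⟩
    obtain ⟨B, hxB, hBi⟩ := hG.exists_index_eq_le hx
    exact hB B hBi ▸ hxB (mem_zpowers x)
  rw [hAtop, index_top] at hA
  exact hp.out.one_lt.ne hA

theorem le_center_of_subsingleton (hG : IsPGroup p G)
    (h1 : {H : Subgroup G | Nat.card H = p}.Subsingleton)
    (h2 : {H : Subgroup G | Nat.card H = p ^ 2}.Subsingleton)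
    {K : Subgroup G} (hK : Nat.card K = p ^ 2) : K ≤ center G := by
  obtain ⟨K₁, hK₁K, hK₁⟩ := Sylow.exists_subgroup_le_card_pow_prime_of_le_card hp.out hG
    (n := 1) (hK ▸ Nat.pow_le_pow_right hp.out.pos one_le_two)
  -- a cyclic subgroup of order `≥ p ^ 2` contains a subgroup of order `p ^ 2`, which must be `K`
  have hcomp (x : G) : zpowers x ≤ K ∨ K ≤ zpowers x := by
    obtain ⟨r, hr⟩ := (hG.to_subgroup (zpowers x)).exists_card_eq
    rcases r with _ | _ | r
    · left
      rw [pow_zero, card_eq_one] at hr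
      exact hr ▸ bot_le
    · exact .inl (h1 (hr.trans (pow_one p)) (hK₁.trans (pow_one p)) ▸ hK₁K)
    · obtain ⟨L, hLx, hL⟩ := Sylow.exists_subgroup_le_card_pow_prime_of_le_card hp.out hG
        (n := 2) (H := zpowers x) (hr ▸ Nat.pow_le_pow_right hp.out.pos (by omega))
      exact .inr (h2 hK hL ▸ hLx)
  have hKcomm : K ≤ centralizer K :=
    le_centralizer_iff_isMulCommutative.mpr (isMulCommutative_of_card_eq_prime_sq hK)
  intro k hk
  refine mem_center_iff.mpr fun x => ?_
  rcases hcomp x with hxK | hKx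
  · exact hKcomm hk x (hxK (mem_zpowers x))
  · obtain ⟨n, rfl⟩ := mem_zpowers_iff.mp (hKx hk)
    exact ((Commute.refl x).zpow_right n).eq

theorem succ_le_ncard_card_le_pow (hG : IsPGroup p G) {k : ℕ}
    (hk : p ^ k ≤ Nat.card G) : k + 1 ≤ {H : Subgroup G | Nat.card H ≤ p ^ k}.ncard := by
  refine le_trans ?_ (Set.ncard_image_le (f := fun H : Subgroup G => Nat.card H))
  refine Set.le_ncard_of_inj_on_range (p ^ ·) (fun i hi => ?_)
    (fun i _ j _ h => Nat.pow_right_injective hp.out.two_le h)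
  obtain ⟨H, hH⟩ := Sylow.exists_subgroup_card_pow_prime_of_le_card hp.out hG
    ((Nat.pow_le_pow_right hp.out.pos (Nat.le_of_lt_succ hi)).trans hk)
  exact ⟨H, hH.trans_le (Nat.pow_le_pow_right hp.out.pos (Nat.le_of_lt_succ hi)), hH⟩

end Prime

variable {G : Type*} [Group G] [Finite G]

theorem four_le_ncard_card_le_four (hG : IsPGroup 2 G) (hG4 : 4 ≤ Nat.card G)
    (hZ : Nat.card (center G) < 4) : 4 ≤ {H : Subgroup G | Nat.card H ≤ 4}.ncard := by
  set T₂ := {H : Subgroup G | Nat.card H = 2}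
  set T₄ := {H : Subgroup G | Nat.card H = 2 ^ 2}
  obtain ⟨K₂, hK₂⟩ :=
    Sylow.exists_subgroup_card_pow_prime_of_le_card Nat.prime_two hG (n := 1) (by omega)
  obtain ⟨K₄, hK₄⟩ := Sylow.exists_subgroup_card_pow_prime_of_le_card Nat.prime_two hG (n := 2) hG4
  have h₂ : 1 ≤ T₂.ncard := (Set.ncard_pos).mpr ⟨K₂, hK₂⟩
  have h₄ : 1 ≤ T₄.ncard := (Set.ncard_pos).mpr ⟨K₄, hK₄⟩
  have h₂₄ : ¬(T₂.ncard ≤ 1 ∧ T₄.ncard ≤ 1) := fun ⟨hu₂, hu₄⟩ => by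
    have := card_le_of_le <| hG.le_center_of_subsingleton
      (Set.ncard_le_one_iff_subsingleton.mp hu₂) (Set.ncard_le_one_iff_subsingleton.mp hu₄) hK₄
    omega
  calc 4 ≤ ({⊥} ∪ (T₂ ∪ T₄) : Set (Subgroup G)).ncard := by
        rw [Set.ncard_union_eq, Set.ncard_union_eq, Set.ncard_singleton]
        · omega
        · exact Set.disjoint_left.mpr fun H (h₂ : _ = 2) (h₄ : _ = 2 ^ 2) => by omega
        · refine Set.disjoint_singleton_left.mpr fun h => ?_
          rcases h with h | h <;> simp [T₂, T₄] at h
    _ ≤ _ := Set.ncard_le_ncard fun H hH => by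
        rcases hH with rfl | (h | h) <;> simp_all [T₂, T₄]

theorem four_le_ncard_card_lt (hG : IsPGroup 2 G) (K : Subgroup G)
    (hK : 2 * Nat.card (center G) < Nat.card K) :
    4 ≤ {H : Subgroup G | Nat.card H < Nat.card K}.ncard := by
  have hKG := card_le_card_group K
  have : Nontrivial G := Finite.one_lt_card_iff_nontrivial.mp <| by
    have := Nat.card_pos (α := center G)
    omega
  have hZ : 2 ≤ Nat.card (center G) := Finite.one_lt_card_iff_nontrivial.mpr hG.center_nontrivial
  obtain ⟨a, ha⟩ := (hG.to_subgroup K).exists_card_eq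
  have ha3 : 3 ≤ a := by
    by_contra!
    interval_cases a <;> simp only [ha] at hK <;> omega
  rcases ha3.eq_or_lt with rfl | h4
  · rw [ha] at hK ⊢
    refine (hG.four_le_ncard_card_le_four (by omega) (by omega)).trans (Set.ncard_le_ncard ?_)
    intro H (hH : Nat.card H ≤ 4)
    show Nat.card H < 2 ^ 3
    omega
  · have h8 : 2 ^ 3 ≤ Nat.card G := (Nat.pow_le_pow_right two_pos h4.le).trans (ha ▸ hKG)
    refine (hG.succ_le_ncard_card_le_pow h8).trans (Set.ncard_le_ncard ?_)
    intro H (hH : Nat.card H ≤ 2 ^ 3)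
    exact hH.trans_lt (ha ▸ Nat.pow_lt_pow_right one_lt_two h4)

theorem three_le_ncard_index_eq_two (hG : IsPGroup 2 G) (hnc : ¬IsCyclic G) :
    3 ≤ {H : Subgroup G | H.index = 2}.ncard := by
  have := Nontrivial.of_not_isCyclic hnc
  obtain ⟨A, -, hA⟩ := hG.exists_index_eq_le (bot_ne_top : (⊥ : Subgroup G) ≠ ⊤)
  obtain ⟨B, hB, hBA⟩ := hG.exists_index_eq_ne hnc hA
  obtain ⟨C, hC, hCA, hCB⟩ := exists_index_eq_two_ne_ne hA hB hBA.symm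
  exact (Set.two_lt_ncard).mpr ⟨A, hA, B, hB, C, hC, hBA.symm, hCA.symm, hCB.symm⟩

theorem three_le_ncard_ne_card_le (hG : IsPGroup 2 G) (hnc : ¬IsCyclic G) {M : Subgroup G}
    (hM : M ≠ ⊤) : 3 ≤ {H : Subgroup G | H ≠ M ∧ Nat.card M ≤ Nat.card H}.ncard := by
  set S := {H : Subgroup G | H.index = 2}
  have hS : 3 ≤ S.ncard := hG.three_le_ncard_index_eq_two hnc
  have hM2 : 2 ≤ M.index := one_lt_index_of_ne_top hM
  calc 3 ≤ (insert ⊤ (S \ {M})).ncard := by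
        rw [Set.ncard_insert_of_notMem fun h => by simp [S] at h]
        have := Set.pred_ncard_le_ncard_sdiff_singleton S M
        omega
    _ ≤ _ := Set.ncard_le_ncard ?_
  rintro H (rfl | ⟨hH : H.index = 2, hHM : H ≠ M⟩)
  · exact ⟨hM.symm, card_le_card_group M |>.trans_eq card_top.symm⟩
  · refine ⟨hHM, ?_⟩
    have hHG := H.card_mul_index
    have hMG := M.card_mul_index
    rw [hH] at hHG
    have := Nat.mul_le_mul_left (Nat.card M) hM2
    omega

end IsPGroup

section CD

variable {G : Type*} [Group G]

theorem mCD_top : mCD (⊤ : Subgroup G) = Nat.card G * Nat.card (center G) := by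
  rw [mCD, card_top, coe_top, centralizer_univ]

variable [Finite G]

theorem mCD_le_mStar (H : Subgroup G) : mCD H ≤ mStar G :=
  le_csSup (Set.finite_range fun K : Subgroup G => mCD K).bddAbove ⟨H, rfl⟩

theorem CD_nonempty : (CD G).Nonempty :=
  (Set.range_nonempty fun H : Subgroup G => mCD H).csSup_mem (Set.finite_range _)

theorem mStar_pos : 0 < mStar G := by
  obtain ⟨H, hH⟩ := CD_nonempty (G := G)
  rw [← hH]
  exact Nat.mul_pos Nat.card_pos Nat.card_pos

theorem centralizer_centralizer_of_mem_CD {H : Subgroup G} (hH : H ∈ CD G) :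
    centralizer (centralizer (H : Set G) : Set G) = H := by
  have hle : H ≤ centralizer (centralizer (H : Set G) : Set G) := le_centralizer_iff.mpr le_rfl
  have h := (mCD_le_mStar (centralizer (H : Set G))).trans hH.ge
  rw [mCD, mCD, mul_comm (Nat.card H)] at h
  exact (eq_of_le_of_card_ge hle (Nat.le_of_mul_le_mul_left h Nat.card_pos)).symm

theorem centralizer_mem_CD {H : Subgroup G} (hH : H ∈ CD G) :
    centralizer (H : Set G) ∈ CD G := by
  show _ * _ = _
  rw [centralizer_centralizer_of_mem_CD hH, mul_comm]
  exact hH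

theorem sup_mem_CD {H K : Subgroup G} (hH : H ∈ CD G) (hK : K ∈ CD G) : H ⊔ K ∈ CD G := by
  have hCinf : centralizer (H : Set G) ⊔ centralizer K ≤
      centralizer ((H ⊓ K : Subgroup G) : Set G) :=
    sup_le (centralizer_le inf_le_left) (centralizer_le inf_le_right)
  have key : mStar G * mStar G ≤ mCD (H ⊔ K) * mStar G :=
    calc mStar G * mStar G = mCD H * mCD K := by
          rw [show mCD H = mStar G from hH, show mCD K = mStar G from hK]
      _ = Nat.card H * Nat.card K *
          (Nat.card (centralizer (H : Set G)) * Nat.card (centralizer (K : Set G))) := by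
          unfold mCD; ring
      _ ≤ Nat.card ↥(H ⊔ K) * Nat.card ↥(H ⊓ K) *
          (Nat.card ↥(centralizer (H : Set G) ⊔ centralizer K) *
            Nat.card ↥(centralizer (H : Set G) ⊓ centralizer K)) :=
          Nat.mul_le_mul (card_mul_card_le_card_sup_mul_card_inf _ _)
            (card_mul_card_le_card_sup_mul_card_inf _ _)
      _ ≤ Nat.card ↥(H ⊔ K) * Nat.card ↥(H ⊓ K) *
          (Nat.card (centralizer ((H ⊓ K : Subgroup G) : Set G)) *
            Nat.card (centralizer ((H ⊔ K : Subgroup G) : Set G))) := by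
          rw [centralizer_sup]; gcongr; exact card_le_of_le hCinf
      _ = mCD (H ⊔ K) * mCD (H ⊓ K) := by unfold mCD; ring
      _ ≤ mCD (H ⊔ K) * mStar G := by gcongr; exact mCD_le_mStar _
  exact le_antisymm (mCD_le_mStar _) (Nat.le_of_mul_le_mul_right key mStar_pos)

theorem exists_CD_sandwich :
    ∃ M ∈ CD G, ∀ H ∈ CD G, centralizer (M : Set G) ≤ H ∧ H ≤ M := by
  obtain ⟨M, hM, hmax⟩ := Set.Finite.exists_maximalFor (fun H : Subgroup G => Nat.card H) (CD G)
    (Set.toFinite _) CD_nonempty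
  have hle : ∀ H ∈ CD G, H ≤ M := fun H hH =>
    le_sup_left.trans (eq_of_le_of_card_ge le_sup_right
      (hmax (sup_mem_CD hH hM) (card_le_of_le le_sup_right))).ge
  refine ⟨M, hM, fun H hH => ⟨?_, hle H hH⟩⟩
  rw [← centralizer_centralizer_of_mem_CD hH]
  exact centralizer_le (hle _ (centralizer_mem_CD hH))

theorem index_mul_card_center_lt {M : Subgroup G} (hM : M ∈ CD G) (hT : ⊤ ∉ CD G) :
    M.index * Nat.card (center G) < Nat.card (centralizer (M : Set G)) := by
  have h := lt_of_le_of_ne (mCD_le_mStar ⊤) hT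
  rw [mCD_top, ← M.card_mul_index, mul_assoc, ← show mCD M = mStar G from hM, mCD] at h
  exact Nat.lt_of_mul_lt_mul_left h

theorem ncard_add_ncard_le_deltaCD {M : Subgroup G} (hM : M ∈ CD G)
    (hsand : ∀ H ∈ CD G, centralizer (M : Set G) ≤ H ∧ H ≤ M) :
    {H : Subgroup G | H ≠ M ∧ Nat.card M ≤ Nat.card H}.ncard +
      {H : Subgroup G | Nat.card H < Nat.card (centralizer (M : Set G))}.ncard ≤ deltaCD G := by
  have hmM := card_le_of_le (hsand M hM).1
  change _ ≤ Nat.card ↥(CD G)ᶜ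
  rw [Nat.card_coe_set_eq, ← Set.ncard_union_eq]
  · refine Set.ncard_le_ncard ?_
    rintro H (⟨hHM, hcard⟩ | (hcard : Nat.card H < _)) hH
    · exact hHM (eq_of_le_of_card_ge (hsand H hH).2 hcard)
    · exact hcard.not_ge (card_le_of_le (hsand H hH).1)
  · exact Set.disjoint_left.mpr fun H ⟨_, h₁⟩ (h₂ : Nat.card H < _) => by omega

end CD

theorem stmt13 {G : Type*} [Group G] [Finite G] (hG : IsPGroup 2 G)
    (hna : ¬ ∀ a b : G, a * b = b * a) (h : deltaCD G ≤ 6) :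
    (⊤ : Subgroup G) ∈ CD G := by
  by_contra hT
  have hnc : ¬IsCyclic G := fun _ => hna mul_comm'
  obtain ⟨M, hM, hsand⟩ := exists_CD_sandwich (G := G)
  have hMT : M ≠ ⊤ := fun hMT => hT (hMT ▸ hM)
  have hm : 2 * Nat.card (center G) < Nat.card (centralizer (M : Set G)) :=
    (Nat.mul_le_mul_right _ (one_lt_index_of_ne_top hMT)).trans_lt (index_mul_card_center_lt hM hT)
  have hlarge := hG.three_le_ncard_ne_card_le hnc hMT
  have hsmall := hG.four_le_ncard_card_lt _ hm
  have := ncard_add_ncard_le_deltaCD hM hsand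
  omega
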